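/- arXiv:math/0605334 — 6 statements merged into one kernel-verified Lean document; each statement's English description precedes it below -/
import Mathlib

section
/- Let h be a nonzero real number and let u, ux, uy : ℤ × ℤ → ℝ be grid functions satisfying, for all j, k ∈ ℤ: (E1) uy(j+1,k+2) − uy(j+1,k) + ux(j+2,k+1) − ux(j,k+1) = 0; (E2) 2·h·ux(j+1,k) = u(j+2,k) − u(j,k); (E3) 2·h·uy(j,k+1) = u(j,k+2) − u(j,k). Then for all j, k ∈ ℤ the following derived relation (an element of the Gröbner basis of the discrete system) holds: ux(j,k+1) + uy(j+1,k) = (1/(2·h))·(u(j+3,k+1) + u(j+1,k+3) − 2·u(j+1,k+1)). -/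
theorem laplace_groebner_relation
    (h : ℝ) (hh : h ≠ 0) (u ux uy : ℤ × ℤ → ℝ)
    (E1 : ∀ j k : ℤ,
      uy (j + 1, k + 2) - uy (j + 1, k) + ux (j + 2, k + 1) - ux (j, k + 1) = 0)
    (E2 : ∀ j k : ℤ, 2 * h * ux (j + 1, k) = u (j + 2, k) - u (j, k))
    (E3 : ∀ j k : ℤ, 2 * h * uy (j, k + 1) = u (j, k + 2) - u (j, k)) :
    ∀ j k : ℤ,
      ux (j, k + 1) + uy (j + 1, k) =
        (1 / (2 * h)) *
          (u (j + 3, k + 1) + u (j + 1, k + 3) - 2 * u (j + 1, k + 1)) := by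
  intro j k
  have h1 := E1 j k
  have h2 := E2 (j + 1) (k + 1)
  have h3 := E3 (j + 1) (k + 1)
  have e2 : (j + 1 + 2 : ℤ) = j + 3 := by ring
  have e3 : (k + 1 + 2 : ℤ) = k + 3 := by ring
  rw [show ((j:ℤ) + 1 + 1, (k:ℤ) + 1) = (j + 2, k + 1) by simp [Prod.ext_iff]; omega,
      show ((j:ℤ) + 1 + 2, (k:ℤ) + 1) = (j + 3, k + 1) by simp [Prod.ext_iff]; omega] at h2
  rw [show ((j:ℤ) + 1, (k:ℤ) + 1 + 1) = (j + 1, k + 2) by simp [Prod.ext_iff]; omega,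
      show ((j:ℤ) + 1, (k:ℤ) + 1 + 2) = (j + 1, k + 3) by simp [Prod.ext_iff]; omega] at h3
  field_simp
  linear_combination -2*h*h1 + h2 + h3
end

section
/- Let h be a nonzero real number and let u, ux, uy : ℤ × ℤ → ℝ be grid functions satisfying, for all j, k ∈ ℤ: (E1) uy(j+1,k+2) − uy(j+1,k) + ux(j+2,k+1) − ux(j,k+1) = 0; (E2') (h/2)·(ux(j+1,k) + ux(j,k)) = u(j+1,k) − u(j,k); (E3') (h/2)·(uy(j,k+1) + uy(j,k)) = u(j,k+1) − u(j,k). Then for all j, k ∈ ℤ the standard five-point scheme in ordinary nodes holds: (u(j+1,k) − 2·u(j,k) + u(j−1,k)) + (u(j,k+1) − 2·u(j,k) + u(j,k−1)) = 0. -/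
theorem laplace_ordinary_node_scheme
    (h : ℝ) (hh : h ≠ 0) (u ux uy : ℤ × ℤ → ℝ)
    (E1 : ∀ j k : ℤ,
      uy (j + 1, k + 2) - uy (j + 1, k) + ux (j + 2, k + 1) - ux (j, k + 1) = 0)
    (E2' : ∀ j k : ℤ,
      (h / 2) * (ux (j + 1, k) + ux (j, k)) = u (j + 1, k) - u (j, k))
    (E3' : ∀ j k : ℤ,
      (h / 2) * (uy (j, k + 1) + uy (j, k)) = u (j, k + 1) - u (j, k)) :
    ∀ j k : ℤ,
      (u (j + 1, k) - 2 * u (j, k) + u (j - 1, k)) +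
        (u (j, k + 1) - 2 * u (j, k) + u (j, k - 1)) = 0 := by
  intro j k
  have e1 := E1 (j - 1) (k - 1)
  have eB := E2' (j - 1) k
  have eD := E3' j (k - 1)
  simp only [show (j - 1 + 1 : ℤ) = j from by ring, show (k - 1 + 2 : ℤ) = k + 1 from by ring,
      show (k - 1 + 1 : ℤ) = k from by ring, show (j - 1 + 2 : ℤ) = j + 1 from by ring] at e1 eB eD
  have eA := E2' j k
  have eC := E3' j k
  linear_combination eB - eA + eD - eC + (h / 2) * e1
end

section
/- Let h, τ be nonzero real numbers, α ∈ ℝ, and let u, ux : ℤ × ℤ → ℝ be grid functions (first index j is the spatial index, second index n is the temporal index) satisfying, for all j, n ∈ ℤ: (H1) (α·τ/2)·(ux(j,n) + ux(j,n+1) − ux(j+2,n) − ux(j+2,n+1)) − 2·h·(u(j+1,n+1) − u(j+1,n)) = 0; (H2) (h/2)·(ux(j+1,n) + ux(j,n)) = u(j+1,n) − u(j,n). Then for all j, n ∈ ℤ the Crank–Nicholson scheme holds: (u(j,n+1) − u(j,n))/τ + α·((u(j+1,n+1) − 2·u(j,n+1) + u(j−1,n+1)) + (u(j+1,n) − 2·u(j,n)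 + u(j−1,n)))/(2·h²) = 0. -/
theorem crank_nicholson_scheme
    (h τ : ℝ) (hh : h ≠ 0) (hτ : τ ≠ 0) (α : ℝ) (u ux : ℤ × ℤ → ℝ)
    (H1 : ∀ j n : ℤ,
      (α * τ / 2) * (ux (j, n) + ux (j, n + 1) - ux (j + 2, n) - ux (j + 2, n + 1)) -
        2 * h * (u (j + 1, n + 1) - u (j + 1, n)) = 0)
    (H2 : ∀ j n : ℤ,
      (h / 2) * (ux (j + 1, n) + ux (j, n)) = u (j + 1, n) - u (j, n)) :
    ∀ j n : ℤ,
      (u (j, n + 1) - u (j, n)) / τ +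
        α * ((u (j + 1, n + 1) - 2 * u (j, n + 1) + u (j - 1, n + 1)) +
              (u (j + 1, n) - 2 * u (j, n) + u (j - 1, n))) / (2 * h ^ 2) = 0 := by
  intro j n
  have h1 := H1 (j - 1) n
  have h2a := H2 (j - 1) n
  have h2b := H2 j n
  have h2c := H2 (j - 1) (n + 1)
  have h2d := H2 j (n + 1)
  simp only [show (j : ℤ) - 1 + 2 = j + 1 from by ring,
    show (j : ℤ) - 1 + 1 = j from by ring] at h1 h2a h2c
  field_simp
  linear_combination -h*h1 - α*τ*(h2b - h2a + h2d - h2c)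
end

section
/- Let h be a nonzero real number (equal temporal and spatial mesh steps) and let u, ut, ux : ℤ × ℤ → ℝ be grid functions (first index j spatial, second index n temporal) satisfying, for all j, n ∈ ℤ: (W1) ut(j+1,n) − ut(j+1,n+2) + ux(j+2,n+1) − ux(j,n+1) = 0; (W2) (h/2)·(ux(j+1,n) + ux(j,n)) = u(j+1,n) − u(j,n); (W3) (h/2)·(ut(j,n+1) + ut(j,n)) = u(j,n+1) − u(j,n). Then for all j, n ∈ ℤ the standard difference scheme for the wave equation holds: u(j,n+1) + u(j,n−1) − u(j+1,n) − u(j−1,n) = 0. -/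
theorem wave_equation_scheme
    (h : ℝ) (hh : h ≠ 0) (u ut ux : ℤ × ℤ → ℝ)
    (W1 : ∀ j n : ℤ,
      ut (j + 1, n) - ut (j + 1, n + 2) + ux (j + 2, n + 1) - ux (j, n + 1) = 0)
    (W2 : ∀ j n : ℤ,
      (h / 2) * (ux (j + 1, n) + ux (j, n)) = u (j + 1, n) - u (j, n))
    (W3 : ∀ j n : ℤ,
      (h / 2) * (ut (j, n + 1) + ut (j, n)) = u (j, n + 1) - u (j, n)) :
    ∀ j n : ℤ,
      u (j, n + 1) + u (j, n - 1) - u (j + 1, n) - u (j - 1, n) = 0 := by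
  intro j n
  have e1 : j - 1 + 1 = j := by ring
  have e2 : n - 1 + 2 = n + 1 := by ring
  have e3 : j - 1 + 2 = j + 1 := by ring
  have e4 : n - 1 + 1 = n := by ring
  have hW1 := W1 (j - 1) (n - 1)
  rw [e1, e2, e3, e4] at hW1
  have hW3a := W3 j (n - 1)
  rw [e4] at hW3a
  have hW3b := W3 j n
  have hW2a := W2 j n
  have hW2b := W2 (j - 1) n
  rw [e1] at hW2b
  linear_combination (-(h / 2)) * hW1 + hW3a - hW3b + hW2a - hW2b
end

section
/- Let h, τ be nonzero real numbers, ν ∈ ℝ, and let u, ux, f : ℤ × ℤ → ℝ be grid functions (first index j spatial, second index n temporal) satisfying, for all j, n ∈ ℤ: (B1) h·(u(j+1,n+2) − u(j+1,n)) − τ·(ν·(ux(j+2,n+1) − ux(j,n+1)) − (f(j+2,n+1) − f(j,n+1))) = 0; (B2) 2·h·ux(j+1,n) = u(j+2,n) − u(j,n). Then for all j, n ∈ ℤ the explicit forward-time scheme for Burgers equation holds: (u(j+2,n+2) − u(j+2,n))/τ − ν·(u(j+4,n+1) − 2·u(j+2,n+1) + u(j,n+1))/(2·h²) + (f(j+3,n+1)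 − f(j+1,n+1))/h = 0. -/
/-!
Eliminate `ux`: (B2) at the two neighbouring cells `j + 2` and `j` expresses the difference of
`ux` across a cell as the central second difference of `u` divided by `2h`. Substituting this
into (B1), shifted by one cell, and dividing by `hτ` gives the scheme.
-/

theorem second_difference_eq_of_central_difference {R : Type*} [CommRing R] (h : R)
    (u ux : ℤ × ℤ → R) (hux : ∀ j n : ℤ, 2 * h * ux (j + 1, n) = u (j + 2, n) - u (j, n))
    (j n : ℤ) :
    2 * h * (ux (j + 3, n) - ux (j + 1, n)) = u (j + 4, n) - 2 * u (j + 2, n) + u (j, n) := by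
  have right := hux (j + 2) n
  have left := hux j n
  simp only [add_assoc, Int.reduceAdd] at right
  linear_combination right - left

theorem burgers_forward_time_scheme
    (h τ : ℝ) (hh : h ≠ 0) (hτ : τ ≠ 0) (ν : ℝ) (u ux f : ℤ × ℤ → ℝ)
    (B1 : ∀ j n : ℤ,
      h * (u (j + 1, n + 2) - u (j + 1, n)) -
        τ * (ν * (ux (j + 2, n + 1) - ux (j, n + 1)) -
              (f (j + 2, n + 1) - f (j, n + 1))) = 0)
    (B2 : ∀ j n : ℤ, 2 * h * ux (j + 1, n) = u (j + 2, n) - u (j, n)) :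
    ∀ j n : ℤ,
      (u (j + 2, n + 2) - u (j + 2, n)) / τ -
        ν * (u (j + 4, n + 1) - 2 * u (j + 2, n + 1) + u (j, n + 1)) / (2 * h ^ 2) +
        (f (j + 3, n + 1) - f (j + 1, n + 1)) / h = 0 := by
  intro j n
  have conservation := B1 (j + 1) n
  simp only [add_assoc, Int.reduceAdd] at conservation
  have second_difference := second_difference_eq_of_central_difference h u ux B2 j (n + 1)
  field_simp
  linear_combination 2 * h * conservation + τ * ν * second_difference
end

section
/- Let φ : ℝ² → ℝ be twice continuously differentiable, let K, γ ∈ ℝ, and fix (x,y) ∈ ℝ². For h ≠ 0 define the difference operators Dx_h φ(x,y) := (φ(x+h,y) − φ(x,y))/h, Dxx_h φ(x,y) := (φ(x+h,y) − 2·φ(x,y) + φ(x−h,y))/h², Dyy_h φ(x,y) := (φ(x,y+h) − 2·φ(x,y) + φ(x,y−h))/h², and define S_h(x,y) := Dxx_h φ(x,y)·( Dxx_h φ(x−h,y)·(K − ((γ+1)/2)·(Dx_h φ(x+h,y) + Dx_h φ(x−h,y))) + Dyy_h φ(x−h,y) ) + Dxx_h φ(x−h,y)·( Dxx_h φ(x,y)·(K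 − ((γ+1)/2)·(Dx_h φ(x+h,y) + Dx_h φ(x−h,y))) + Dyy_h φ(x,y) ). Then S_h(x,y) tends, as h → 0, to 2·∂²φ/∂x²(x,y)·( (K − (γ+1)·∂φ/∂x(x,y))·∂²φ/∂x²(x,y) + ∂²φ/∂y²(x,y) ). In particular, if φ satisfies the stationary Falkowich–Karman equation ∂²φ/∂x²·(K − (γ+1)·∂φ/∂x) + ∂²φ/∂y² = 0 at (x,y), then S_h(x,y) → 0 as h → 0. -/
/-!
Every difference quotient in `S_h` equals a first or second directional derivative of `φ` at a
point within `O(h)` of `(x, y)`: by the mean value theorem for the forward quotients, and by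
Cauchy's mean value theorem (for `t ↦ f (a + t) + f (a - t)` against `t ↦ t ^ 2`) for the central
second differences. These derivatives are continuous since `φ` is `C²`, so each quotient converges,
and `S_h`, a polynomial in them, converges to the value of that polynomial at the derivatives.
-/

open Filter Topology Set

section MeanValue

variable {f f' f'' : ℝ → ℝ}

theorem exists_abs_sub_le_and_slope_eq (hf : ∀ t, HasDerivAt f (f' t) t) (a : ℝ) {h : ℝ}
    (hh : h ≠ 0) : ∃ ξ, |ξ - a| ≤ |h| ∧ (f (a + h) - f a) / h = f' ξ := by
  have hfc : Continuous f := continuous_iff_continuousAt.2 fun t => (hf t).continuousAt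
  rcases hh.lt_or_gt with hneg | hpos
  · obtain ⟨ξ, hξ, heq⟩ := exists_hasDerivAt_eq_slope f f' (by linarith : a + h < a)
      hfc.continuousOn fun t _ => hf t
    refine ⟨ξ, ?_, ?_⟩
    · rw [abs_of_neg hneg, abs_le]; constructor <;> linarith [hξ.1, hξ.2]
    · rw [heq, ← neg_div_neg_eq]; ring_nf
  · obtain ⟨ξ, hξ, heq⟩ := exists_hasDerivAt_eq_slope f f' (by linarith : a < a + h)
      hfc.continuousOn fun t _ => hf t
    refine ⟨ξ, ?_, ?_⟩
    · rw [abs_of_pos hpos, abs_le]; constructor <;> linarith [hξ.1, hξ.2]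
    · rw [heq, add_sub_cancel_left]

private theorem exists_abs_sub_le_and_secondDiff_eq_of_pos (hf : ∀ t, HasDerivAt f (f' t) t)
    (hf' : ∀ t, HasDerivAt f' (f'' t) t) (a : ℝ) {h : ℝ} (hh : 0 < h) :
    ∃ ξ, |ξ - a| ≤ |h| ∧ (f (a + h) - 2 * f a + f (a - h)) / h ^ 2 = f'' ξ := by
  have hF : ∀ t, HasDerivAt (fun t => f (a + t) + f (a - t)) (f' (a + t) - f' (a - t)) t :=
    fun t => (((hf _).comp_const_add a t).add ((hf _).comp_const_sub a t)).congr_deriv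
      (sub_eq_add_neg _ _).symm
  obtain ⟨c, hc, hcauchy⟩ := exists_ratio_hasDerivAt_eq_ratio_slope _ _ hh
    (continuous_iff_continuousAt.2 fun t => (hF t).continuousAt).continuousOn (fun t _ => hF t)
    (fun t => t ^ 2) (fun t => 2 * t) (continuous_pow 2).continuousOn
    fun t _ => by simpa using hasDerivAt_pow 2 t
  obtain ⟨ξ, hξ, hslope⟩ := exists_hasDerivAt_eq_slope f' f'' (by linarith [hc.1] : a - c < a + c)
    (continuous_iff_continuousAt.2 fun t => (hf' t).continuousAt).continuousOn fun t _ => hf' t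
  refine ⟨ξ, ?_, ?_⟩
  · rw [abs_of_pos hh, abs_le]; constructor <;> linarith [hξ.1, hξ.2, hc.2]
  · have hd : f' (a + c) - f' (a - c) = 2 * c * f'' ξ := by
      rw [hslope, show a + c - (a - c) = 2 * c by ring]; field_simp [hc.1.ne']
    simp only [hd, add_zero, sub_zero] at hcauchy
    rw [div_eq_iff (by positivity)]
    apply mul_left_cancel₀ (by linarith [hc.1] : 2 * c ≠ 0)
    linear_combination -hcauchy

theorem exists_abs_sub_le_and_secondDiff_eq (hf : ∀ t, HasDerivAt f (f' t) t)
    (hf' : ∀ t, HasDerivAt f' (f'' t) t) (a : ℝ) {h : ℝ} (hh : h ≠ 0) :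
    ∃ ξ, |ξ - a| ≤ |h| ∧ (f (a + h) - 2 * f a + f (a - h)) / h ^ 2 = f'' ξ := by
  rcases hh.lt_or_gt with hneg | hpos
  · obtain ⟨ξ, hξ, heq⟩ := exists_abs_sub_le_and_secondDiff_eq_of_pos hf hf' a (neg_pos.2 hneg)
    refine ⟨ξ, by rwa [abs_neg] at hξ, ?_⟩
    rw [← heq, neg_sq, sub_neg_eq_add, ← sub_eq_add_neg]
    ring_nf
  · exact exists_abs_sub_le_and_secondDiff_eq_of_pos hf hf' a hpos

end MeanValue

theorem tendsto_of_forall_exists_dist_le {X Y : Type*} [PseudoMetricSpace X] [TopologicalSpace Y]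
    {g : X → Y} {c : X} (hg : ContinuousAt g c) {p : ℝ → X}
    (hp : Tendsto p (𝓝[≠] 0) (𝓝 c)) {u : ℝ → Y} (r : ℝ)
    (H : ∀ h ≠ 0, ∃ ξ, dist ξ (p h) ≤ |h| * r ∧ u h = g ξ) :
    Tendsto u (𝓝[≠] 0) (𝓝 (g c)) := by
  refine fun U hU => mem_map.2 ?_
  obtain ⟨ε, hε, hball⟩ := Metric.mem_nhds_iff.1 (hg hU)
  have hr : Tendsto (fun h : ℝ => |h| * r) (𝓝[≠] 0) (𝓝 0) := by
    have hc : Continuous fun h : ℝ => |h| * r := by fun_prop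
    exact (hc.tendsto' 0 0 (by simp)).mono_left nhdsWithin_le_nhds
  filter_upwards [hp (Metric.ball_mem_nhds c (half_pos hε)),
    hr.eventually_lt_const (half_pos hε), self_mem_nhdsWithin] with h hph hhr hh
  obtain ⟨ξ, hξ, hu⟩ := H h hh
  rw [mem_preimage, hu]
  apply hball
  calc dist ξ c ≤ dist ξ (p h) + dist (p h) c := dist_triangle _ _ _
    _ < ε / 2 + ε / 2 := add_lt_add_of_le_of_lt (hξ.trans hhr.le) hph
    _ = ε := add_halves ε

section Directional

variable {E : Type*} [NormedAddCommGroup E] [NormedSpace ℝ E] {φ : E → ℝ}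

theorem hasDerivAt_comp_add_smul (hφ : Differentiable ℝ φ) (p v : E) (t : ℝ) :
    HasDerivAt (fun s : ℝ => φ (p + s • v)) (fderiv ℝ φ (p + t • v) v) t := by
  have hline : HasDerivAt (fun s : ℝ => p + s • v) v t := by
    simpa using ((hasDerivAt_id t).smul_const v).const_add p
  exact (hφ _).hasFDerivAt.comp_hasDerivAt t hline

theorem ContDiff.fderiv_apply_right {n : WithTop ℕ∞} (hφ : ContDiff ℝ (n + 1) φ) (v : E) :
    ContDiff ℝ n fun q => fderiv ℝ φ q v :=
  (hφ.fderiv_right le_rfl).clm_apply contDiff_const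

theorem ContDiff.continuous_fderiv_apply_right (hφ : ContDiff ℝ 1 φ) (v : E) :
    Continuous fun q => fderiv ℝ φ q v :=
  (hφ.continuous_fderiv one_ne_zero).clm_apply continuous_const

theorem exists_dist_le_and_slope_eq_fderiv (hφ : Differentiable ℝ φ) (p v : E) {h : ℝ}
    (hh : h ≠ 0) : ∃ ξ, dist ξ p ≤ |h| * ‖v‖ ∧ (φ (p + h • v) - φ p) / h = fderiv ℝ φ ξ v := by
  obtain ⟨t, ht, heq⟩ :=
    exists_abs_sub_le_and_slope_eq (hasDerivAt_comp_add_smul hφ p v) 0 hh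
  refine ⟨p + t • v, ?_, by simpa using heq⟩
  rw [dist_eq_norm, add_sub_cancel_left, norm_smul, Real.norm_eq_abs]
  exact mul_le_mul_of_nonneg_right (by simpa using ht) (norm_nonneg v)

theorem exists_dist_le_and_secondDiff_eq_fderiv (hφ : ContDiff ℝ 2 φ) (p v : E) {h : ℝ}
    (hh : h ≠ 0) : ∃ ξ, dist ξ p ≤ |h| * ‖v‖ ∧
      (φ (p + h • v) - 2 * φ p + φ (p - h • v)) / h ^ 2 =
        fderiv ℝ (fun q => fderiv ℝ φ q v) ξ v := by
  have hφ' : ContDiff ℝ 1 fun q => fderiv ℝ φ q v := hφ.fderiv_apply_right v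
  obtain ⟨t, ht, heq⟩ := exists_abs_sub_le_and_secondDiff_eq
    (hasDerivAt_comp_add_smul (hφ.differentiable two_ne_zero) p v)
    (hasDerivAt_comp_add_smul (hφ'.differentiable one_ne_zero) p v) 0 hh
  refine ⟨p + t • v, ?_, by simpa [sub_eq_add_neg] using heq⟩
  rw [dist_eq_norm, add_sub_cancel_left, norm_smul, Real.norm_eq_abs]
  exact mul_le_mul_of_nonneg_right (by simpa using ht) (norm_nonneg v)

variable {p : ℝ → E} {c : E}

theorem tendsto_slope_fderiv (hφ : ContDiff ℝ 1 φ) (v : E) (hp : Tendsto p (𝓝[≠] 0) (𝓝 c)) :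
    Tendsto (fun h => (φ (p h + h • v) - φ (p h)) / h) (𝓝[≠] 0) (𝓝 (fderiv ℝ φ c v)) :=
  tendsto_of_forall_exists_dist_le
    (hφ.continuous_fderiv_apply_right v).continuousAt hp ‖v‖
    fun _ hh => exists_dist_le_and_slope_eq_fderiv (hφ.differentiable one_ne_zero) _ v hh

theorem tendsto_secondDiff_fderiv (hφ : ContDiff ℝ 2 φ) (v : E)
    (hp : Tendsto p (𝓝[≠] 0) (𝓝 c)) :
    Tendsto (fun h => (φ (p h + h • v) - 2 * φ (p h) + φ (p h - h • v)) / h ^ 2) (𝓝[≠] 0)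
      (𝓝 (fderiv ℝ (fun q => fderiv ℝ φ q v) c v)) :=
  tendsto_of_forall_exists_dist_le
    ((hφ.fderiv_apply_right (n := 1) v).continuous_fderiv_apply_right v).continuousAt hp ‖v‖
    fun _ hh => exists_dist_le_and_secondDiff_eq_fderiv hφ _ v hh

end Directional

section Coordinates

variable {F : Type*} [NormedAddCommGroup F] [NormedSpace ℝ F] {ψ : ℝ × ℝ → F}

theorem hasDerivAt_comp_mk_left (hψ : Differentiable ℝ ψ) (a b : ℝ) :
    HasDerivAt (fun s => ψ (s, b)) (fderiv ℝ ψ (a, b) (1, 0)) a :=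
  (hψ _).hasFDerivAt.comp_hasDerivAt a ((hasDerivAt_id a).prodMk (hasDerivAt_const a b))

theorem hasDerivAt_comp_mk_right (hψ : Differentiable ℝ ψ) (a b : ℝ) :
    HasDerivAt (fun t => ψ (a, t)) (fderiv ℝ ψ (a, b) (0, 1)) b :=
  (hψ _).hasFDerivAt.comp_hasDerivAt b ((hasDerivAt_const b a).prodMk (hasDerivAt_id b))

end Coordinates

theorem deriv_deriv_comp_mk_left {φ : ℝ × ℝ → ℝ} (hφ : ContDiff ℝ 2 φ) (a b : ℝ) :
    deriv (fun s => deriv (fun s' => φ (s', b)) s) a =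
      fderiv ℝ (fun q => fderiv ℝ φ q (1, 0)) (a, b) (1, 0) := by
  have hφ' : ContDiff ℝ 1 fun q => fderiv ℝ φ q (1, 0) := hφ.fderiv_apply_right _
  simp only [fun s => (hasDerivAt_comp_mk_left (hφ.differentiable two_ne_zero) s b).deriv]
  exact (hasDerivAt_comp_mk_left (hφ'.differentiable one_ne_zero) a b).deriv

theorem deriv_deriv_comp_mk_right {φ : ℝ × ℝ → ℝ} (hφ : ContDiff ℝ 2 φ) (a b : ℝ) :
    deriv (fun t => deriv (fun t' => φ (a, t')) t) b =
      fderiv ℝ (fun q => fderiv ℝ φ q (0, 1)) (a, b) (0, 1) := by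
  have hφ' : ContDiff ℝ 1 fun q => fderiv ℝ φ q (0, 1) := hφ.fderiv_apply_right _
  simp only [fun t => (hasDerivAt_comp_mk_right (hφ.differentiable two_ne_zero) a t).deriv]
  exact (hasDerivAt_comp_mk_right (hφ'.differentiable one_ne_zero) a b).deriv

theorem falkowich_karman_scheme_consistency
    (φ : ℝ × ℝ → ℝ) (hφ : ContDiff ℝ 2 φ) (K γ x y : ℝ)
    (Dx Dxx Dyy : ℝ → ℝ → ℝ → ℝ)
    (hDx : ∀ h a b : ℝ, Dx h a b = (φ (a + h, b) - φ (a, b)) / h)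
    (hDxx : ∀ h a b : ℝ,
      Dxx h a b = (φ (a + h, b) - 2 * φ (a, b) + φ (a - h, b)) / h ^ 2)
    (hDyy : ∀ h a b : ℝ,
      Dyy h a b = (φ (a, b + h) - 2 * φ (a, b) + φ (a, b - h)) / h ^ 2)
    (S : ℝ → ℝ)
    (hS : ∀ h : ℝ,
      S h =
        Dxx h x y *
            (Dxx h (x - h) y *
                (K - ((γ + 1) / 2) * (Dx h (x + h) y + Dx h (x - h) y)) +
              Dyy h (x - h) y) +
          Dxx h (x - h) y *
            (Dxx h x y *
                (K - ((γ + 1) / 2) * (Dx h (x + h) y + Dx h (x - h) y)) +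
              Dyy h x y))
    (px pxx pyy : ℝ)
    (hpx : px = deriv (fun s => φ (s, y)) x)
    (hpxx : pxx = deriv (fun s => deriv (fun s' => φ (s', y)) s) x)
    (hpyy : pyy = deriv (fun s => deriv (fun s' => φ (x, s')) s) y) :
    Tendsto S (𝓝[≠] (0 : ℝ))
        (𝓝 (2 * pxx * ((K - (γ + 1) * px) * pxx + pyy))) ∧
      (pxx * (K - (γ + 1) * px) + pyy = 0 →
        Tendsto S (𝓝[≠] (0 : ℝ)) (𝓝 0)) := by
  have hφ1 : ContDiff ℝ 1 φ := hφ.of_le one_le_two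
  rw [(hasDerivAt_comp_mk_left (hφ1.differentiable one_ne_zero) x y).deriv] at hpx
  rw [deriv_deriv_comp_mk_left hφ] at hpxx
  rw [deriv_deriv_comp_mk_right hφ] at hpyy
  have tendsto_shift : ∀ c : ℝ,
      Tendsto (fun h : ℝ => ((x + c * h, y) : ℝ × ℝ)) (𝓝[≠] 0) (𝓝 (x, y)) := fun c =>
    ((by fun_prop : Continuous fun h : ℝ => ((x + c * h, y) : ℝ × ℝ)).tendsto' 0 _
      (by simp)).mono_left nhdsWithin_le_nhds
  have lim_Dx_add : Tendsto (fun h => Dx h (x + h) y) (𝓝[≠] 0) (𝓝 px) := by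
    simpa [hDx, hpx, add_assoc] using tendsto_slope_fderiv hφ1 (1, 0) (tendsto_shift 1)
  have lim_Dx_sub : Tendsto (fun h => Dx h (x - h) y) (𝓝[≠] 0) (𝓝 px) := by
    simpa [hDx, hpx, ← sub_eq_add_neg] using tendsto_slope_fderiv hφ1 (1, 0) (tendsto_shift (-1))
  have lim_Dxx : Tendsto (fun h => Dxx h x y) (𝓝[≠] 0) (𝓝 pxx) := by
    simpa [hDxx, hpxx] using tendsto_secondDiff_fderiv hφ (1, 0) (tendsto_shift 0)
  have lim_Dxx_sub : Tendsto (fun h => Dxx h (x - h) y) (𝓝[≠] 0) (𝓝 pxx) := by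
    simpa [hDxx, hpxx, ← sub_eq_add_neg] using
      tendsto_secondDiff_fderiv hφ (1, 0) (tendsto_shift (-1))
  have lim_Dyy : Tendsto (fun h => Dyy h x y) (𝓝[≠] 0) (𝓝 pyy) := by
    simpa [hDyy, hpyy] using tendsto_secondDiff_fderiv hφ (0, 1) (tendsto_shift 0)
  have lim_Dyy_sub : Tendsto (fun h => Dyy h (x - h) y) (𝓝[≠] 0) (𝓝 pyy) := by
    simpa [hDyy, hpyy, ← sub_eq_add_neg] using
      tendsto_secondDiff_fderiv hφ (0, 1) (tendsto_shift (-1))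
  have lim_coeff := tendsto_const_nhds (x := K).sub
    (tendsto_const_nhds (x := (γ + 1) / 2).mul (lim_Dx_add.add lim_Dx_sub))
  have lim_S : Tendsto S (𝓝[≠] 0) (𝓝 (2 * pxx * ((K - (γ + 1) * px) * pxx + pyy))) := by
    rw [funext hS]
    convert (lim_Dxx.mul ((lim_Dxx_sub.mul lim_coeff).add lim_Dyy_sub)).add
      (lim_Dxx_sub.mul ((lim_Dxx.mul lim_coeff).add lim_Dyy)) using 2
    ring
  refine ⟨lim_S, fun hFK => ?_⟩
  rwa [show (K - (γ + 1) * px) * pxx + pyy = 0 by linear_combination hFK, mul_zero] at lim_S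
end
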